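/- arXiv:2201.01108 — 2 statements merged into one kernel-verified Lean document; each statement's English description precedes it below -/
import Mathlib

section
/- Let P be a manifold with a nondegenerate 1-form ϖ = ω ⊕ α valued in a semidirect product Lie algebra g ⋉ R^n (ϖ a coframe, i.e. a linear isomorphism T_x P → g ⋉ R^n at each point). For h ∈ g let h̄ := ϖ^{-1}(h ⊕ 0). Then the following are equivalent: (i) for all h ∈ g and ξ ∈ g ⋉ R^n, [h̄, ϖ^{-1}(ξ)] = ϖ^{-1}([h,ξ]); (ii) for all h ∈ g, i_{h̄}(dϖ + (1/2)[ϖ ∧ ϖ]) = 0; (iii) there exist functions Ω^A_{bc} antisymmetric in b,c such that dϖ^A + (1/2)[ϖ ∧ ϖ]^A = (1/2) Ω^A_{bc} α^b ∧ α^c; (iv) for all h ∈ g, L_{h̄} ϖ + ad_h ∘ ϖ = 0. -/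
noncomputable section
set_option maxHeartbeats 1000000

open Asymptotics Filter Topology ContinuousLinearMap

variable {E 𝔭 : Type} [NormedAddCommGroup E] [NormedSpace ℝ E]
  [NormedAddCommGroup 𝔭] [NormedSpace ℝ 𝔭]

/-- continuity of the pointwise inverse of a smooth family of invertible maps -/
lemma symm_tendsto (ϖ : E → (E ≃L[ℝ] 𝔭))
    (hϖ : Continuous fun x => (ϖ x : E →L[ℝ] 𝔭)) (x : E) :
    Tendsto (fun y => ((ϖ y).symm : 𝔭 →L[ℝ] E)) (𝓝 x) (𝓝 ((ϖ x).symm : 𝔭 →L[ℝ] E)) := by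
  set W : E → E →L[ℝ] 𝔭 := fun y => (ϖ y : E →L[ℝ] 𝔭) with hWdef
  set S : 𝔭 →L[ℝ] E := ((ϖ x).symm : 𝔭 →L[ℝ] E) with hSdef
  set N : E → 𝔭 →L[ℝ] E := fun y => ((ϖ y).symm : 𝔭 →L[ℝ] E) with hNdef
  have key : ∀ y, N y - S = (N y).comp ((W x - W y).comp S) := by
    intro y
    ext ζ
    simp [N, S, W, map_sub]
  have hev : ∀ᶠ y in 𝓝 x, ‖W y - W x‖ ≤ 1 / (2 * (‖S‖ + 1)) := by
    have : Tendsto (fun y => ‖W y - W x‖) (𝓝 x) (𝓝 0) := by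
      have := (hϖ.tendsto x).sub_const (W x)
      simpa using this.norm
    have hpos : (0:ℝ) < 1 / (2 * (‖S‖ + 1)) := by positivity
    filter_upwards [this.eventually (eventually_le_nhds hpos)] with y hy using hy
  have hbnd : ∀ᶠ y in 𝓝 x, ‖N y - S‖ ≤ 2 * (‖S‖ + 1) ^ 2 * ‖W y - W x‖ := by
    filter_upwards [hev] with y hy
    have h1 : ‖N y - S‖ ≤ ‖N y‖ * (‖W x - W y‖ * ‖S‖) := by
      calc ‖N y - S‖ = ‖(N y).comp ((W x - W y).comp S)‖ := by rw [key y]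
        _ ≤ ‖N y‖ * ‖(W x - W y).comp S‖ := opNorm_comp_le _ _
        _ ≤ ‖N y‖ * (‖W x - W y‖ * ‖S‖) :=
            mul_le_mul_of_nonneg_left (opNorm_comp_le _ _) (norm_nonneg _)
    have hhalf : ‖W x - W y‖ * ‖S‖ ≤ 1 / 2 := by
      rw [norm_sub_rev]
      calc ‖W y - W x‖ * ‖S‖ ≤ (1 / (2 * (‖S‖ + 1))) * (‖S‖ + 1) := by
            gcongr; linarith [norm_nonneg S]
        _ ≤ 1 / 2 := by
            rw [div_mul_eq_mul_div, mul_comm]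
            rw [div_le_div_iff₀ (by positivity) (by norm_num)]
            ring_nf
            nlinarith [norm_nonneg S]
    have hNy : ‖N y‖ ≤ 2 * (‖S‖ + 1) := by
      have h2 : ‖N y‖ ≤ ‖S‖ + ‖N y - S‖ := by
        calc ‖N y‖ = ‖S + (N y - S)‖ := by rw [add_sub_cancel]
          _ ≤ ‖S‖ + ‖N y - S‖ := norm_add_le _ _
      nlinarith [norm_nonneg (N y), norm_nonneg S, norm_nonneg (N y - S),
        h1, mul_le_mul_of_nonneg_left hhalf (norm_nonneg (N y))]
    calc ‖N y - S‖ ≤ ‖N y‖ * (‖W x - W y‖ * ‖S‖) := h1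
      _ ≤ (2 * (‖S‖ + 1)) * (‖W y - W x‖ * (‖S‖ + 1)) := by
          rw [norm_sub_rev (W x)]
          have hS1 : ‖S‖ ≤ ‖S‖ + 1 := by linarith
          exact mul_le_mul hNy (mul_le_mul_of_nonneg_left hS1 (norm_nonneg _))
            (mul_nonneg (norm_nonneg _) (norm_nonneg _)) (by positivity)
      _ = 2 * (‖S‖ + 1) ^ 2 * ‖W y - W x‖ := by ring
  have hto0 : Tendsto (fun y => N y - S) (𝓝 x) (𝓝 0) := by
    apply squeeze_zero_norm' hbnd
    have : Tendsto (fun y => ‖W y - W x‖) (𝓝 x) (𝓝 0) := by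
      have := (hϖ.tendsto x).sub_const (W x); simpa using this.norm
    simpa using this.const_mul (2 * (‖S‖ + 1) ^ 2)
  simpa [N] using tendsto_sub_nhds_zero_iff.mp hto0

/-- derivative of the pointwise inverse of a smooth family, applied to a fixed vector -/
lemma symm_hasFDerivAt (ϖ : E → (E ≃L[ℝ] 𝔭))
    (hϖ : Differentiable ℝ fun x => (ϖ x : E →L[ℝ] 𝔭)) (x : E) (ξ : 𝔭) :
    HasFDerivAt (fun y => (ϖ y).symm ξ)
      (-(((ϖ x).symm : 𝔭 →L[ℝ] E).comp
          ((fderiv ℝ (fun y => (ϖ y : E →L[ℝ] 𝔭)) x).flip ((ϖ x).symm ξ)))) x := by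
  set W : E → E →L[ℝ] 𝔭 := fun y => (ϖ y : E →L[ℝ] 𝔭) with hWdef
  set S : 𝔭 →L[ℝ] E := ((ϖ x).symm : 𝔭 →L[ℝ] E) with hSdef
  set N : E → 𝔭 →L[ℝ] E := fun y => ((ϖ y).symm : 𝔭 →L[ℝ] E) with hNdef
  set W' : E →L[ℝ] E →L[ℝ] 𝔭 := fderiv ℝ W x with hW'def
  have hW : HasFDerivAt W W' x := (hϖ x).hasFDerivAt
  rw [hasFDerivAt_iff_isLittleO]
  have key : ∀ y, N y ξ - N x ξ = N y ((W x - W y) (S ξ)) := by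
    intro y
    simp [N, S, W, map_sub]
  have hiden : ∀ y, N y ξ - N x ξ -
      (-(S.comp (W'.flip (S ξ)))) (y - x)
      = -(S ((W y - W x - W' (y - x)) (S ξ))) + (N y - S) ((W x - W y) (S ξ)) := by
    intro y
    rw [key y]
    have : N y ((W x - W y) (S ξ)) = S ((W x - W y) (S ξ)) + (N y - S) ((W x - W y) (S ξ)) := by
      simp
    rw [this]
    simp only [ContinuousLinearMap.neg_apply, ContinuousLinearMap.comp_apply,
      ContinuousLinearMap.flip_apply, ContinuousLinearMap.sub_apply, map_sub, map_neg]
    abel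
  have term1 : (fun y => -(S ((W y - W x - W' (y - x)) (S ξ)))) =o[𝓝 x] fun y => y - x := by
    have hR : (fun y => W y - W x - W' (y - x)) =o[𝓝 x] fun y => y - x := hW.isLittleO
    exact ((((S.comp (ContinuousLinearMap.apply ℝ 𝔭 (S ξ))).isBigO_comp
      (fun y => W y - W x - W' (y - x)) (𝓝 x)).trans_isLittleO hR).neg_left).congr_left
      (fun y => by simp)
  have hNto : Tendsto (fun y => N y - S) (𝓝 x) (𝓝 0) := by
    have := symm_tendsto ϖ (hϖ.continuous) x
    exact tendsto_sub_nhds_zero_iff.mpr this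
  have hu : (fun y => (W x - W y) (S ξ)) =O[𝓝 x] fun y => y - x := by
    have h1 : (fun y => W x - W y) =O[𝓝 x] fun y => y - x := by
      have := hW.isBigO_sub
      simpa using this.neg_left
    exact ((ContinuousLinearMap.apply ℝ 𝔭 (S ξ)).isBigO_comp _ _).trans h1
  have term2 : (fun y => (N y - S) ((W x - W y) (S ξ))) =o[𝓝 x] fun y => y - x := by
    have h1 : (fun y => ‖N y - S‖) =o[𝓝 x] (fun _ => (1:ℝ)) := by
      rw [isLittleO_one_iff]
      simpa using hNto.norm
    have h2 : (fun y => ‖(W x - W y) (S ξ)‖) =O[𝓝 x] fun y => ‖y - x‖ :=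
      hu.norm_left.norm_right
    have prod : (fun y => ‖N y - S‖ * ‖(W x - W y) (S ξ)‖) =o[𝓝 x] fun y => y - x := by
      have := h1.mul_isBigO h2
      simp only [one_mul] at this
      exact this.of_norm_right
    have hb : (fun y => (N y - S) ((W x - W y) (S ξ))) =O[𝓝 x]
        fun y => ‖N y - S‖ * ‖(W x - W y) (S ξ)‖ := by
      apply Asymptotics.isBigO_of_le
      intro y
      calc ‖(N y - S) ((W x - W y) (S ξ))‖ ≤ ‖N y - S‖ * ‖(W x - W y) (S ξ)‖ :=
            ContinuousLinearMap.le_opNorm _ _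
        _ ≤ ‖‖N y - S‖ * ‖(W x - W y) (S ξ)‖‖ := le_abs_self _
    exact hb.trans_isLittleO prod
  exact ((term1.add term2).congr_left (fun y => (hiden y).symm))

end



/-!
STATEMENT 9.  The 10-manifold `P` is modelled on a normed space `E` (global chart),
so that 1-forms are maps `E → (E →L[ℝ] 𝔭)`, the exterior differential of a 1-form on
constant vector fields is `dω(v,w) = ∂_v ω(w) - ∂_w ω(v)`, the Lie bracket of vector
fields is `[X,Y] = ∂_X Y - ∂_Y X`, and the Lie derivative of a 1-form is computed by
Cartan's formula `L_X ω = i_X dω + d(i_X ω)`.  The semidirect product Lie algebra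
`g ⋉ ℝⁿ` is a normed space `𝔭` with a bilinear bracket `B` (antisymmetric, Jacobi),
a subalgebra `g'` and a complementary abelian ideal `m`, with `π` the projection onto
`m` along `g'` (so `α := π ∘ ϖ` is the `ℝⁿ`-component of the coframe `ϖ`).
`ϖ` is a nondegenerate (pointwise invertible) smooth 1-form with values in `𝔭`,
`h̄ := ϖ⁻¹(h ⊕ 0)` for `h ∈ g'`, and `C := dϖ + (1/2)[ϖ ∧ ϖ]` (note
`(1/2)[ϖ∧ϖ](v,w) = ⁅ϖv, ϖw⁆`).  The four conditions (i)–(iv) are equivalent. -/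

noncomputable section

variable {E 𝔭 : Type} [NormedAddCommGroup E] [NormedSpace ℝ E]
  [NormedAddCommGroup 𝔭] [NormedSpace ℝ 𝔭]

/-- Exterior differential of a 1-form on flat space, on constant vector fields. -/
def dOne (ω : E → E →L[ℝ] 𝔭) (x : E) (v w : E) : 𝔭 :=
  fderiv ℝ (fun y => ω y w) x v - fderiv ℝ (fun y => ω y v) x w

/-- Lie bracket of vector fields on flat space. -/
def vecBracket (X Y : E → E) (x : E) : E :=
  fderiv ℝ Y x (X x) - fderiv ℝ X x (Y x)

/-- Lie derivative of a 1-form along a vector field, via Cartan's formula. -/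
def lieDerivOne (X : E → E) (ω : E → E →L[ℝ] 𝔭) (x v : E) : 𝔭 :=
  dOne ω x (X x) v + fderiv ℝ (fun y => ω y (X y)) x v

theorem generalized_cartan_connection_tfae
    (B : 𝔭 →ₗ[ℝ] 𝔭 →ₗ[ℝ] 𝔭)
    (hBanti : ∀ x y : 𝔭, B x y = - B y x)
    (hBjacobi : ∀ x y z : 𝔭, B (B x y) z + B (B y z) x + B (B z x) y = 0)
    (g' m : Submodule ℝ 𝔭)
    (hsubalg : ∀ x ∈ g', ∀ y ∈ g', B x y ∈ g')
    (hideal : ∀ x : 𝔭, ∀ y ∈ m, B x y ∈ m)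
    (habelian : ∀ x ∈ m, ∀ y ∈ m, B x y = 0)
    (hcompl : IsCompl g' m)
    (π : 𝔭 →ₗ[ℝ] 𝔭)
    (hπm : ∀ x ∈ m, π x = x) (hπg : ∀ x ∈ g', π x = 0) (hπrange : ∀ x, π x ∈ m)
    (ϖ : E → (E ≃L[ℝ] 𝔭))
    (hϖ : ContDiff ℝ (⊤ : ℕ∞) fun x => (ϖ x : E →L[ℝ] 𝔭)) :
    let C : E → E → E → 𝔭 :=
      fun x v w => dOne (fun y => (ϖ y : E →L[ℝ] 𝔭)) x v w + B (ϖ x v) (ϖ x w)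
    let vf : 𝔭 → E → E := fun ξ x => (ϖ x).symm ξ
    -- (i) the fundamental fields bracket as the Lie algebra tells them to
    let cond1 : Prop := ∀ h ∈ g', ∀ ξ : 𝔭,
      ∀ x : E, vecBracket (vf h) (vf ξ) x = vf (B h ξ) x
    -- (ii) the curvature is killed by contraction with the vertical fields h̄
    let cond2 : Prop := ∀ h ∈ g', ∀ x v, C x (vf h x) v = 0
    -- (iii) `dϖ + (1/2)[ϖ∧ϖ] = (1/2) Ω_{bc} α^b ∧ α^c` for some antisymmetric
    --       coefficient functions, i.e. the curvature factors through `α = π ∘ ϖ`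
    let cond3 : Prop := ∃ F : E → 𝔭 →ₗ[ℝ] 𝔭 →ₗ[ℝ] 𝔭,
      (∀ x a b, F x a b = - F x b a) ∧
      (∀ x v w, C x v w = F x (π (ϖ x v)) (π (ϖ x w)))
    -- (iv) `L_{h̄} ϖ + ad_h ∘ ϖ = 0`
    let cond4 : Prop := ∀ h ∈ g', ∀ x v,
      lieDerivOne (vf h) (fun y => (ϖ y : E →L[ℝ] 𝔭)) x v + B h (ϖ x v) = 0
    (cond1 ↔ cond2) ∧ (cond2 ↔ cond3) ∧ (cond3 ↔ cond4) := by
  intro C vf cond1 cond2 cond3 cond4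
  set W : E → E →L[ℝ] 𝔭 := fun y => (ϖ y : E →L[ℝ] 𝔭) with hWdef
  have hϖd : Differentiable ℝ W := hϖ.differentiable (by simp)
  -- derivative of evaluation at a constant vector
  have happly : ∀ (x : E) (w : E),
      fderiv ℝ (fun y => W y w) x = (ContinuousLinearMap.apply ℝ 𝔭 w).comp (fderiv ℝ W x) := by
    intro x w
    exact ((ContinuousLinearMap.apply ℝ 𝔭 w).hasFDerivAt.comp x (hϖd x).hasFDerivAt).fderiv
  have hdOne : ∀ (x : E) (v w : E),
      dOne W x v w = fderiv ℝ W x v w - fderiv ℝ W x w v := by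
    intro x v w
    simp [dOne, happly]
  have hCform : ∀ (x : E) (v w : E),
      C x v w = fderiv ℝ W x v w - fderiv ℝ W x w v + B (ϖ x v) (ϖ x w) := by
    intro x v w
    show dOne W x v w + B (ϖ x v) (ϖ x w) = _
    rw [hdOne]
  have hCanti : ∀ (x : E) (v w : E), C x v w = - C x w v := by
    intro x v w
    rw [hCform, hCform, hBanti (ϖ x v) (ϖ x w)]
    abel
  have hCadd1 : ∀ (x : E) (a b w : E), C x (a + b) w = C x a w + C x b w := by
    intro x a b w
    simp only [hCform, map_add, ContinuousLinearMap.add_apply, LinearMap.add_apply]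
    abel
  have hCadd2 : ∀ (x : E) (v a b : E), C x v (a + b) = C x v a + C x v b := by
    intro x v a b
    rw [hCanti x v (a+b), hCadd1, hCanti x a v, hCanti x b v]
    abel
  -- ϖ applied to vf
  have hϖvf : ∀ (ξ : 𝔭) (x : E), ϖ x (vf ξ x) = ξ := fun ξ x => (ϖ x).apply_symm_apply ξ
  -- fderiv of vf
  have hvfder : ∀ (ξ : 𝔭) (x : E), fderiv ℝ (vf ξ) x =
      -(((ϖ x).symm : 𝔭 →L[ℝ] E).comp ((fderiv ℝ W x).flip ((ϖ x).symm ξ))) :=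
    fun ξ x => (symm_hasFDerivAt ϖ hϖd x ξ).fderiv
  -- bracket formula
  have hvb : ∀ (h ξ : 𝔭) (x : E), vecBracket (vf h) (vf ξ) x
      = -((ϖ x).symm (dOne W x (vf h x) (vf ξ x))) := by
    intro h ξ x
    rw [vecBracket, hvfder, hvfder, hdOne]
    simp only [ContinuousLinearMap.neg_apply, ContinuousLinearMap.comp_apply,
      ContinuousLinearMap.flip_apply, ContinuousLinearEquiv.coe_coe, map_sub]
    show -(ϖ x).symm ((fderiv ℝ W x) ((ϖ x).symm h) ((ϖ x).symm ξ)) -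
        -(ϖ x).symm ((fderiv ℝ W x) ((ϖ x).symm ξ) ((ϖ x).symm h)) =
      -((ϖ x).symm ((fderiv ℝ W x) ((ϖ x).symm h) ((ϖ x).symm ξ)) -
        (ϖ x).symm ((fderiv ℝ W x) ((ϖ x).symm ξ) ((ϖ x).symm h)))
    abel
  -- (1) ↔ (2)
  have h12 : cond1 ↔ cond2 := by
    constructor
    · intro h1 h hg x v
      have := h1 h hg (ϖ x v) x
      rw [hvb] at this
      have hv : vf (ϖ x v) x = v := (ϖ x).symm_apply_apply v
      rw [hv] at this
      have : dOne W x (vf h x) v = - B h (ϖ x v) := by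
        have := congrArg (ϖ x) this
        rw [(ϖ x).apply_symm_apply] at this
        show dOne W x (vf h x) v = -B h (ϖ x v)
        have h2 : ϖ x (-(ϖ x).symm (dOne W x (vf h x) v)) = -(dOne W x (vf h x) v) := by
          rw [map_neg, (ϖ x).apply_symm_apply]
        rw [h2] at this
        linear_combination (norm := abel) -this
      show dOne W x (vf h x) v + B (ϖ x (vf h x)) (ϖ x v) = 0
      rw [this, hϖvf]
      abel
    · intro h2 h hg ξ x
      have hz := h2 h hg x (vf ξ x)
      have hz' : dOne W x (vf h x) (vf ξ x) = - B h ξ := by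
        have : dOne W x (vf h x) (vf ξ x) + B (ϖ x (vf h x)) (ϖ x (vf ξ x)) = 0 := hz
        rw [hϖvf, hϖvf] at this
        linear_combination (norm := abel) this
      rw [hvb, hz']
      show -(ϖ x).symm (-B h ξ) = (ϖ x).symm (B h ξ)
      rw [map_neg, neg_neg]
  -- decomposition : a - π a ∈ g'
  have hgdec : ∀ a : 𝔭, a - π a ∈ g' := by
    intro a
    have ha : a ∈ g' ⊔ m := by rw [hcompl.sup_eq_top]; trivial
    obtain ⟨g, hg, m', hm', rfl⟩ := Submodule.mem_sup.mp ha
    have : π (g + m') = m' := by rw [map_add, hπg g hg, hπm m' hm', zero_add]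
    rw [this]
    simpa using hg
  have hππ : ∀ a : 𝔭, π (π a) = π a := fun a => hπm _ (hπrange a)
  -- (2) → (3)
  have h23 : cond2 → cond3 := by
    intro h2
    -- bilinear version of C
    have hCsmul1 : ∀ (x : E) (c : ℝ) (a w : E), C x (c • a) w = c • C x a w := by
      intro x c a w
      simp only [hCform, map_smul, ContinuousLinearMap.smul_apply, LinearMap.smul_apply,
        smul_sub, smul_add]
    have hCsmul2 : ∀ (x : E) (v : E) (c : ℝ) (a : E), C x v (c • a) = c • C x v a := by
      intro x v c a
      rw [hCanti x v (c • a), hCsmul1, hCanti x a v, smul_neg, neg_neg]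
    refine ⟨fun x => LinearMap.mk₂ ℝ
        (fun a b => C x ((ϖ x).symm (π a)) ((ϖ x).symm (π b)))
        (fun a b c => by beta_reduce; rw [map_add, map_add, hCadd1])
        (fun c a b => by beta_reduce; rw [map_smul, map_smul, hCsmul1])
        (fun a b c => by beta_reduce; rw [map_add, map_add, hCadd2])
        (fun c a b => by beta_reduce; rw [map_smul, map_smul, hCsmul2]), ?_, ?_⟩
    · intro x a b
      simp only [LinearMap.mk₂_apply]
      exact hCanti x _ _
    · intro x v w
      simp only [LinearMap.mk₂_apply, hππ]
      -- C vanishes when one argument maps into g'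
      have hker : ∀ u w : E, ϖ x u ∈ g' → C x u w = 0 := by
        intro u w hu
        have := h2 (ϖ x u) hu x w
        have hvfu : vf (ϖ x u) x = u := (ϖ x).symm_apply_apply u
        rwa [hvfu] at this
      have hker2 : ∀ v u : E, ϖ x u ∈ g' → C x v u = 0 := by
        intro v u hu
        rw [hCanti, hker u v hu, neg_zero]
      set vm : E := (ϖ x).symm (π (ϖ x v)) with hvm
      set wm : E := (ϖ x).symm (π (ϖ x w)) with hwm
      have hvsplit : v = (v - vm) + vm := by abel
      have hwsplit : w = (w - wm) + wm := by abel
      have hvg : ϖ x (v - vm) ∈ g' := by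
        rw [map_sub, hvm, (ϖ x).apply_symm_apply]
        exact hgdec _
      have hwg : ϖ x (w - wm) ∈ g' := by
        rw [map_sub, hwm, (ϖ x).apply_symm_apply]
        exact hgdec _
      calc C x v w = C x ((v - vm) + vm) ((w - wm) + wm) := by rw [← hvsplit, ← hwsplit]
        _ = (C x (v - vm) (w - wm) + C x (v - vm) wm) + (C x vm (w - wm) + C x vm wm) := by
            rw [hCadd1, hCadd2, hCadd2]
        _ = C x vm wm := by
            rw [hker _ _ hvg, hker _ _ hvg, hker2 _ _ hwg]
            abel
  -- (3) → (2)
  have h32 : cond3 → cond2 := by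
    rintro ⟨F, _, hF⟩ h hg x v
    rw [hF]
    have : ϖ x (vf h x) = h := hϖvf h x
    rw [this, hπg h hg, map_zero, LinearMap.zero_apply]
  -- (2) ↔ (4)
  have h24 : cond2 ↔ cond4 := by
    have hpt : ∀ (h : 𝔭) (x v : E),
        lieDerivOne (vf h) W x v + B h (ϖ x v) = C x (vf h x) v := by
      intro h x v
      have hconst : (fun y => W y (vf h y)) = fun _ => h := funext fun y => hϖvf h y
      rw [lieDerivOne, hconst]
      rw [fderiv_fun_const]
      show dOne W x (vf h x) v + 0 + B h (ϖ x v) = dOne W x (vf h x) v + B (ϖ x (vf h x)) (ϖ x v)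
      rw [hϖvf h x, add_zero]
    constructor
    · intro h2 h hg x v
      rw [hpt]
      exact h2 h hg x v
    · intro h4 h hg x v
      rw [← hpt]
      exact h4 h hg x v
  exact ⟨h12, ⟨h23, h32⟩, ⟨fun h3 => h24.mp (h32 h3), fun h4 => h23 (h24.mpr h4)⟩⟩

end
end

section
/- Under the equivalent conditions of the preceding statement (ϖ a generalised Cartan connection), the map h ↦ h̄ := ϖ^{-1}(h ⊕ 0) is a Lie algebra homomorphism from g into vector fields on P: [h̄_1, h̄_2] = \overline{[h_1, h_2]} for all h_1, h_2 ∈ g. -/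
/-!
STATEMENT 10.  Same flat-chart setting as Statement 9: `P` is modelled on a normed
space `E`; `𝔭` (playing `g ⋉ ℝⁿ`) is a normed space with a bilinear bracket `B`
(antisymmetric, Jacobi), `g'` a subalgebra and `m` a complementary abelian ideal
with projection `π` (so `α := π ∘ ϖ`); `ϖ` is a nondegenerate smooth `𝔭`-valued
1-form satisfying the generalised Cartan connection equation
`dϖ + (1/2)[ϖ ∧ ϖ] = (1/2) Ω_{bc} α^b ∧ α^c` for some (arbitrary, antisymmetric)
coefficient functions, encoded by the factorization `F` of the curvature through
`α`.  Conclusion: `h ↦ h̄ := ϖ⁻¹(h ⊕ 0)` is a Lie algebra homomorphism from `g'`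
into vector fields: `[h̄₁, h̄₂] = \overline{[h₁,h₂]}`. -/

noncomputable section

variable {E 𝔭 : Type} [NormedAddCommGroup E] [NormedSpace ℝ E]
  [NormedAddCommGroup 𝔭] [NormedSpace ℝ 𝔭]

open ContinuousLinearMap

lemma half_bound {K ε : ℝ} (hK : 0 ≤ K) (hε : 0 < ε) :
    K * (ε / (2 * (K + 1))) ≤ ε / 2 := by
  have h1 : (0:ℝ) < 2 * (K + 1) := by linarith
  rw [mul_div_assoc', div_le_div_iff₀ h1 two_pos]
  nlinarith

lemma symm_sub_symm (ϖ : E → (E ≃L[ℝ] 𝔭)) (x y : E) :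
    ((ϖ y).symm : 𝔭 →L[ℝ] E) - ((ϖ x).symm : 𝔭 →L[ℝ] E)
      = -(((ϖ y).symm : 𝔭 →L[ℝ] E).comp
          ((((ϖ y) : E →L[ℝ] 𝔭) - ((ϖ x) : E →L[ℝ] 𝔭)).comp ((ϖ x).symm : 𝔭 →L[ℝ] E))) := by
  ext p
  simp [map_sub]

lemma hasFDerivAt_symm_apply (ϖ : E → (E ≃L[ℝ] 𝔭)) (x : E)
    {Φ' : E →L[ℝ] (E →L[ℝ] 𝔭)}
    (hd : HasFDerivAt (fun y => ((ϖ y) : E →L[ℝ] 𝔭)) Φ' x) (h : 𝔭) :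
    HasFDerivAt (fun y => (ϖ y).symm h)
      (-(((ϖ x).symm : 𝔭 →L[ℝ] E).comp (Φ'.flip ((ϖ x).symm h)))) x := by
  set σ : E → (𝔭 →L[ℝ] E) := fun y => ((ϖ y).symm : 𝔭 →L[ℝ] E) with hσ
  set W : E → (E →L[ℝ] 𝔭) := fun y => ((ϖ y) : E →L[ℝ] 𝔭) with hW
  set Yx : E := (ϖ x).symm h with hYx
  set a := ‖σ x‖ with ha
  -- Δ → 0
  have hcont : ContinuousAt (fun y => W y - W x) x := hd.continuousAt.sub continuousAt_const
  have hΔ0 : Filter.Tendsto (fun y => ‖W y - W x‖) (nhds x) (nhds 0) := by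
    have := hcont.norm
    simpa using this.tendsto
  -- eventually ‖σ y‖ ≤ 2a
  have hM : ∀ᶠ y in nhds x, ‖σ y‖ ≤ 2 * a := by
    have hsmall : ∀ᶠ y in nhds x, ‖W y - W x‖ * a ≤ 1/2 := by
      have : Filter.Tendsto (fun y => ‖W y - W x‖ * a) (nhds x) (nhds 0) := by
        simpa using hΔ0.mul_const a
      exact this.eventually_le_const (by norm_num)
    filter_upwards [hsmall] with y hy
    have hid : σ y - σ x = -((σ y).comp ((W y - W x).comp (σ x))) := symm_sub_symm ϖ x y
    have hb : ‖σ y - σ x‖ ≤ ‖σ y‖ * (‖W y - W x‖ * a) := by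
      rw [hid, norm_neg]
      calc ‖(σ y).comp ((W y - W x).comp (σ x))‖
          ≤ ‖σ y‖ * ‖(W y - W x).comp (σ x)‖ := opNorm_comp_le _ _
        _ ≤ ‖σ y‖ * (‖W y - W x‖ * a) := by
            gcongr; exact opNorm_comp_le _ _
    have h2 : ‖σ y‖ - a ≤ ‖σ y - σ x‖ := by
      have := norm_sub_norm_le (σ y) (σ x); linarith
    have h3 : ‖σ y‖ * (‖W y - W x‖ * a) ≤ ‖σ y‖ * (1/2) :=
      mul_le_mul_of_nonneg_left hy (norm_nonneg _)
    linarith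
  have hdiffσ : ∀ᶠ y in nhds x, ‖σ y - σ x‖ ≤ 2 * a * a * ‖W y - W x‖ := by
    filter_upwards [hM] with y hy
    have hid : σ y - σ x = -((σ y).comp ((W y - W x).comp (σ x))) := symm_sub_symm ϖ x y
    rw [hid, norm_neg]
    calc ‖(σ y).comp ((W y - W x).comp (σ x))‖
        ≤ ‖σ y‖ * (‖W y - W x‖ * a) :=
          (opNorm_comp_le _ _).trans (by gcongr; exact opNorm_comp_le _ _)
      _ ≤ 2 * a * (‖W y - W x‖ * a) := by gcongr
      _ = 2 * a * a * ‖W y - W x‖ := by ring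
  have goal : (fun y => (ϖ y).symm h - (ϖ x).symm h
      - (-(((ϖ x).symm : 𝔭 →L[ℝ] E).comp (Φ'.flip Yx))) (y - x)) =o[nhds x] fun y => y - x := by
    rw [Asymptotics.isLittleO_iff]
    intro ε hε
    set b := ‖Yx‖ with hb
    set c := ‖Φ'‖ with hc
    set K1 : ℝ := 2 * a * b with hK1
    set K2 : ℝ := 2 * a * a * (c * b) with hK2
    have hK1n : 0 ≤ K1 := by positivity
    have hK2n : 0 ≤ K2 := by positivity
    have e1 : ∀ᶠ y in nhds x, ‖W y - W x - Φ' (y - x)‖ ≤ (ε / (2 * (K1 + 1))) * ‖y - x‖ :=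
      Asymptotics.IsLittleO.bound hd.isLittleO (by positivity)
    have e2 : ∀ᶠ y in nhds x, ‖W y - W x‖ ≤ ε / (2 * (K2 + 1)) :=
      hΔ0.eventually_le_const (by positivity)
    filter_upwards [e1, e2, hM, hdiffσ] with y h1 h2 h3 h4
    -- algebraic identity
    have key : (ϖ y).symm h - (ϖ x).symm h
          - (-(((ϖ x).symm : 𝔭 →L[ℝ] E).comp (Φ'.flip Yx))) (y - x)
        = -(σ y ((W y - W x - Φ' (y - x)) Yx)) - ((σ y - σ x) ((Φ' (y - x)) Yx)) := by
      simp only [neg_apply, comp_apply, flip_apply, sub_apply, map_sub, hσ, hW, hYx,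
      ContinuousLinearEquiv.coe_coe, ContinuousLinearEquiv.symm_apply_apply,
      ContinuousLinearEquiv.apply_symm_apply]
      abel
    rw [key]
    have hb1 : ‖σ y ((W y - W x - Φ' (y - x)) Yx)‖ ≤ 2 * a * ((ε / (2 * (K1 + 1))) * ‖y - x‖ * b) := by
      calc ‖σ y ((W y - W x - Φ' (y - x)) Yx)‖
          ≤ ‖σ y‖ * (‖W y - W x - Φ' (y - x)‖ * b) :=
            (le_opNorm _ _).trans (by gcongr; exact le_opNorm _ _)
        _ ≤ 2 * a * ((ε / (2 * (K1 + 1))) * ‖y - x‖ * b) := by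
            have : ‖W y - W x - Φ' (y - x)‖ * b ≤ (ε / (2 * (K1 + 1))) * ‖y - x‖ * b := by gcongr
            exact mul_le_mul h3 this (by positivity) (by positivity)
    have hb2 : ‖(σ y - σ x) ((Φ' (y - x)) Yx)‖
        ≤ (2 * a * a * (ε / (2 * (K2 + 1)))) * (c * ‖y - x‖ * b) := by
      calc ‖(σ y - σ x) ((Φ' (y - x)) Yx)‖
          ≤ ‖σ y - σ x‖ * (c * ‖y - x‖ * b) := by
            refine (le_opNorm _ _).trans ?_
            gcongr
            exact (le_opNorm _ _).trans (by gcongr; exact le_opNorm _ _)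
        _ ≤ (2 * a * a * (ε / (2 * (K2 + 1)))) * (c * ‖y - x‖ * b) := by
            have : ‖σ y - σ x‖ ≤ 2 * a * a * (ε / (2 * (K2 + 1))) :=
              h4.trans (by gcongr)
            exact mul_le_mul_of_nonneg_right this (by positivity)
    have hf1 : 2 * a * ((ε / (2 * (K1 + 1))) * ‖y - x‖ * b) ≤ (ε / 2) * ‖y - x‖ := by
      have := half_bound hK1n hε
      calc 2 * a * ((ε / (2 * (K1 + 1))) * ‖y - x‖ * b)
          = (K1 * (ε / (2 * (K1 + 1)))) * ‖y - x‖ := by rw [hK1]; ring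
        _ ≤ (ε / 2) * ‖y - x‖ := by gcongr
    have hf2 : (2 * a * a * (ε / (2 * (K2 + 1)))) * (c * ‖y - x‖ * b) ≤ (ε / 2) * ‖y - x‖ := by
      have := half_bound hK2n hε
      calc (2 * a * a * (ε / (2 * (K2 + 1)))) * (c * ‖y - x‖ * b)
          = (K2 * (ε / (2 * (K2 + 1)))) * ‖y - x‖ := by rw [hK2]; ring
        _ ≤ (ε / 2) * ‖y - x‖ := by gcongr
    calc ‖-(σ y ((W y - W x - Φ' (y - x)) Yx)) - ((σ y - σ x) ((Φ' (y - x)) Yx))‖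
        ≤ ‖σ y ((W y - W x - Φ' (y - x)) Yx)‖ + ‖(σ y - σ x) ((Φ' (y - x)) Yx)‖ := by
          rw [sub_eq_add_neg]
          refine (norm_add_le _ _).trans ?_
          rw [norm_neg, norm_neg]
      _ ≤ (ε / 2) * ‖y - x‖ + (ε / 2) * ‖y - x‖ :=
          add_le_add (hb1.trans hf1) (hb2.trans hf2)
      _ = ε * ‖y - x‖ := by ring
  exact HasFDerivAt.of_isLittleO goal

theorem fundamental_fields_lie_algebra_action
    (B : 𝔭 →ₗ[ℝ] 𝔭 →ₗ[ℝ] 𝔭)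
    (hBanti : ∀ x y : 𝔭, B x y = - B y x)
    (hBjacobi : ∀ x y z : 𝔭, B (B x y) z + B (B y z) x + B (B z x) y = 0)
    (g' m : Submodule ℝ 𝔭)
    (hsubalg : ∀ x ∈ g', ∀ y ∈ g', B x y ∈ g')
    (hideal : ∀ x : 𝔭, ∀ y ∈ m, B x y ∈ m)
    (habelian : ∀ x ∈ m, ∀ y ∈ m, B x y = 0)
    (hcompl : IsCompl g' m)
    (π : 𝔭 →ₗ[ℝ] 𝔭)
    (hπm : ∀ x ∈ m, π x = x) (hπg : ∀ x ∈ g', π x = 0) (hπrange : ∀ x, π x ∈ m)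
    (ϖ : E → (E ≃L[ℝ] 𝔭))
    (hϖ : ContDiff ℝ (⊤ : ℕ∞) fun x => (ϖ x : E →L[ℝ] 𝔭))
    -- the generalised Cartan connection equation:
    -- dϖ + (1/2)[ϖ∧ϖ] = (1/2) Ω_{bc} α^b ∧ α^c with antisymmetric coefficients
    (F : E → 𝔭 →ₗ[ℝ] 𝔭 →ₗ[ℝ] 𝔭)
    (hFanti : ∀ x a b, F x a b = - F x b a)
    (hcartan : ∀ x v w,
      dOne (fun y => (ϖ y : E →L[ℝ] 𝔭)) x v w + B (ϖ x v) (ϖ x w)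
        = F x (π (ϖ x v)) (π (ϖ x w))) :
    ∀ h₁ ∈ g', ∀ h₂ ∈ g', ∀ x : E,
      vecBracket (fun y => (ϖ y).symm h₁) (fun y => (ϖ y).symm h₂) x
        = (ϖ x).symm (B h₁ h₂) := by
  intro h₁ hh₁ h₂ hh₂ x
  have hdiff : DifferentiableAt ℝ (fun y => ((ϖ y) : E →L[ℝ] 𝔭)) x :=
    (hϖ.differentiable (by simp)).differentiableAt
  set Φ' := fderiv ℝ (fun y => ((ϖ y) : E →L[ℝ] 𝔭)) x with hΦ'
  have hd : HasFDerivAt (fun y => ((ϖ y) : E →L[ℝ] 𝔭)) Φ' x := hdiff.hasFDerivAt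
  have hX := hasFDerivAt_symm_apply ϖ x hd h₁
  have hY := hasFDerivAt_symm_apply ϖ x hd h₂
  set Xx : E := (ϖ x).symm h₁ with hXx
  set Yx : E := (ϖ x).symm h₂ with hYx
  have hx1 : (ϖ x) Xx = h₁ := ContinuousLinearEquiv.apply_symm_apply _ _
  have hx2 : (ϖ x) Yx = h₂ := ContinuousLinearEquiv.apply_symm_apply _ _
  have hflip : ∀ w : E, fderiv ℝ (fun y => ((ϖ y) : E →L[ℝ] 𝔭) w) x = Φ'.flip w := by
    intro w
    have h0 : HasFDerivAt (fun _ : E => w) (0 : E →L[ℝ] E) x := hasFDerivAt_const w x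
    have := (hd.clm_apply h0).fderiv
    simpa using this
  have hdOne : dOne (fun y => ((ϖ y) : E →L[ℝ] 𝔭)) x Yx Xx = Φ' Yx Xx - Φ' Xx Yx := by
    rw [dOne, hflip, hflip]
    simp
  have hc := hcartan x Yx Xx
  rw [hdOne, hx1, hx2, hπg h₁ hh₁, hπg h₂ hh₂] at hc
  simp only [map_zero, LinearMap.zero_apply] at hc
  have hkey : Φ' Yx Xx - Φ' Xx Yx = B h₁ h₂ := by
    rw [hBanti h₁ h₂]
    exact eq_neg_of_add_eq_zero_left hc
  rw [vecBracket, hY.fderiv, hX.fderiv]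
  have goal2 : (ϖ x).symm ((Φ' Yx) Xx - (Φ' Xx) Yx) = (ϖ x).symm (B h₁ h₂) := by rw [hkey]
  rw [← goal2, map_sub]
  simp only [ContinuousLinearMap.neg_apply, ContinuousLinearMap.comp_apply,
    ContinuousLinearMap.flip_apply, ContinuousLinearEquiv.coe_coe]
  abel

end
end
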